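/- arXiv:2007.00107 — 4 statements merged into one kernel-verified Lean document; each statement's English description precedes it below -/
import Mathlib

section
/- Let p ≥ 1 and let Q ⊆ {0,1}^p be a nonempty finite set of 0–1 vectors, viewed as a subset of ℝ^p, and let Q⁰ = Q \ {0}. Then there exists a finite set F ⊆ ℝ^p such that conv(Q⁰) = conv(Q) ∩ ⋂_{π ∈ F} {z ∈ ℝ^p : π᜔ᵀz ≥ 1}, i.e., the convex hull of Q⁰ equals the intersection of the convex hull of Q with finitely many half-spaces of the form π^⊤ z ≥ 1. -/
/-!
Write `A = Q⁰`. If `0 ∈ conv A` no cut is needed. Otherwise a point of `conv (insert 0 A)` is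
`θ • w` with `w ∈ conv A`, and on the ray through `w` the hull `conv A` is the segment from the
first point `t • w` in it to `w`. Farkas' lemma for the finitely generated, hence closed, cone
spanned by `A - t • w` yields a functional `f ≥ 1` on `A` with `f (t • w) = 1`; then `t • w` lies
in the hull of the tight set `T = {q ∈ A | f q = 1}`, so every functional that is `≥ 1` on `A` and
`= 1` on `T` cuts the ray exactly at `t • w`. One such functional for each of the finitely many
possible tight sets `T ⊆ A` gives the finite family of cuts.
-/

open Set PointedCone

section ConicCombination

variable {𝕜 E ι : Type*} [Field 𝕜] [LinearOrder 𝕜] [IsStrictOrderedRing 𝕜]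
  [AddCommGroup E] [Module 𝕜 E]

theorem PointedCone.mem_hull_image_finset_iff {v : ι → E} {s : Finset ι} {x : E} :
    x ∈ hull 𝕜 (v '' s) ↔ ∃ c : ι → 𝕜, (∀ i ∈ s, 0 ≤ c i) ∧ ∑ i ∈ s, c i • v i = x := by
  refine ⟨fun hx => ?_, ?_⟩
  · obtain ⟨c, rfl⟩ := (Submodule.mem_span_image_finset_iff_exists_fun' _).1 hx
    exact ⟨fun i => c i, fun i _ => (c i).2, rfl⟩
  · rintro ⟨c, hc, rfl⟩
    refine Submodule.sum_mem _ fun i hi => ?_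
    exact Submodule.smul_mem _ (⟨c i, hc i hi⟩ : {c : 𝕜 // 0 ≤ c})
      (Submodule.subset_span (mem_image_of_mem v hi))

theorem Finset.exists_sub_mul_nonneg_and_eq_zero {s : Finset ι} {c μ : ι → 𝕜}
    (hc : ∀ i ∈ s, 0 ≤ c i) (hμ : ∃ i ∈ s, 0 < μ i) :
    ∃ t : 𝕜, (∀ i ∈ s, 0 ≤ c i - t * μ i) ∧ ∃ i ∈ s, c i - t * μ i = 0 := by
  obtain ⟨j, hj, hmin⟩ := (s.filter (0 < μ ·)).exists_min_image (fun i => c i / μ i)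
    (Finset.filter_nonempty_iff.2 hμ)
  rw [Finset.mem_filter] at hj
  refine ⟨c j / μ j, fun i hi => ?_, j, hj.1, by field_simp [hj.2.ne']; ring⟩
  rcases le_or_gt (μ i) 0 with hμi | hμi
  · nlinarith [hc i hi, div_nonneg (hc j hj.1) hj.2.le]
  · linarith [(le_div_iff₀ hμi).1 (hmin i (Finset.mem_filter.2 ⟨hi, hμi⟩))]

theorem PointedCone.exists_mem_hull_image_erase [DecidableEq ι] {v : ι → E} {s : Finset ι}
    {x : E} (hs : ¬LinearIndepOn 𝕜 v s) (hx : x ∈ hull 𝕜 (v '' s)) :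
    ∃ i ∈ s, x ∈ hull 𝕜 (v '' (s.erase i)) := by
  obtain ⟨c, hc, rfl⟩ := mem_hull_image_finset_iff.1 hx
  obtain ⟨μ, hμv, hμ⟩ : ∃ μ : ι → 𝕜, ∑ i ∈ s, μ i • v i = 0 ∧ ∃ i ∈ s, 0 < μ i := by
    simp only [linearIndepOn_finset_iff, not_forall] at hs
    obtain ⟨μ, hμv, i, hi, hμi⟩ := hs
    rcases lt_or_gt_of_ne hμi with hneg | hpos
    · exact ⟨-μ, by simp [hμv], i, hi, neg_pos.2 hneg⟩
    · exact ⟨μ, hμv, i, hi, hpos⟩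
  obtain ⟨t, hct, j, hj, hcj⟩ := Finset.exists_sub_mul_nonneg_and_eq_zero hc hμ
  refine ⟨j, hj, mem_hull_image_finset_iff.2
    ⟨fun i => c i - t * μ i, fun i hi => hct i (Finset.mem_of_mem_erase hi), ?_⟩⟩
  rw [Finset.sum_erase _ (by simp only [hcj, zero_smul])]
  simp only [sub_smul, mul_smul, Finset.sum_sub_distrib, ← Finset.smul_sum, hμv, smul_zero,
    sub_zero]

theorem exists_smul_mem_convexHull_of_neg_mem_hull {A : Finset E} {u : E}
    (hu : u ∈ convexHull 𝕜 (A : Set E)) (h : -u ∈ hull 𝕜 ((· - u) '' A)) :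
    ∃ s : 𝕜, 0 ≤ s ∧ s < 1 ∧ s • u ∈ convexHull 𝕜 (A : Set E) := by
  obtain ⟨c, hc, hcu⟩ := mem_hull_image_finset_iff.1 h
  obtain ⟨w, hw0, hw1, hwu⟩ := Finset.mem_convexHull.1 hu
  rw [Finset.centerMass_eq_of_sum_1 _ _ hw1] at hwu
  set S := ∑ q ∈ A, c q
  have hS : 0 ≤ S := Finset.sum_nonneg hc
  have hcomb : ∑ q ∈ A, (c q + w q) • q = S • u := by
    simp only [smul_sub, Finset.sum_sub_distrib, ← Finset.sum_smul] at hcu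
    simp only [add_smul, Finset.sum_add_distrib, id] at hwu ⊢
    rw [hwu]
    linear_combination (norm := module) hcu
  have hmem := A.centerMass_mem_convexHull (fun q hq => add_nonneg (hc q hq) (hw0 q hq))
    (by rw [Finset.sum_add_distrib, hw1]; linarith) (z := id) (s := (A : Set E))
    (fun q hq => hq)
  rw [Finset.centerMass, Finset.sum_add_distrib, hw1] at hmem
  simp only [id, hcomb, smul_smul] at hmem
  exact ⟨(S + 1)⁻¹ * S, by positivity, by rw [inv_mul_lt_iff₀ (by positivity)]; linarith, hmem⟩

end ConicCombination

section

variable {E ι : Type*} [NormedAddCommGroup E] [NormedSpace ℝ E]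

theorem PointedCone.isClosed_hull_image_of_linearIndepOn {v : ι → E} {s : Finset ι}
    (hs : LinearIndepOn ℝ v s) : IsClosed (hull ℝ (v '' s) : Set E) := by
  set L := Fintype.linearCombination ℝ (fun i : s => v i)
  have hL : L.ker = ⊥ :=
    LinearMap.ker_eq_bot.2 (linearIndependent_iff_injective_fintypeLinearCombination.1 hs)
  have hhull : (hull ℝ (v '' s) : Set E) = L '' Ici 0 := by
    ext x
    simp only [SetLike.mem_coe, Submodule.mem_span_image_finset_iff_exists_fun, mem_image,
      mem_Ici, L, Fintype.linearCombination_apply]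
    constructor
    · rintro ⟨c, rfl⟩
      exact ⟨fun i => c i, fun i => (c i).2, rfl⟩
    · rintro ⟨c, hc, rfl⟩
      exact ⟨fun i => ⟨c i, hc i⟩, rfl⟩
  rw [hhull]
  exact (L.isClosedEmbedding_of_injective hL).isClosedMap _ isClosed_Ici

theorem PointedCone.isClosed_hull_image_finset (v : ι → E) (s : Finset ι) :
    IsClosed (hull ℝ (v '' s) : Set E) := by
  classical
  induction s using Finset.strongInduction with
  | H s ih =>
  by_cases hs : LinearIndepOn ℝ v s
  · exact isClosed_hull_image_of_linearIndepOn hs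
  have hunion : (hull ℝ (v '' s) : Set E) = ⋃ i ∈ s, (hull ℝ (v '' (s.erase i)) : Set E) := by
    refine Subset.antisymm (fun x hx => ?_) (iUnion₂_subset fun i _ => ?_)
    · obtain ⟨i, hi, hx⟩ := exists_mem_hull_image_erase hs hx
      exact mem_iUnion₂.2 ⟨i, hi, hx⟩
    · exact Submodule.span_mono (image_mono (Finset.coe_subset.2 (s.erase_subset i)))
  rw [hunion]
  exact isClosed_biUnion_finset fun i hi => ih _ (Finset.erase_ssubset hi)

theorem exists_one_le_and_eq_one_of_smul_notMem_convexHull {A : Finset E} {u : E}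
    (hu : u ∈ convexHull ℝ (A : Set E))
    (hmin : ∀ s : ℝ, 0 ≤ s → s < 1 → s • u ∉ convexHull ℝ (A : Set E)) :
    ∃ f : StrongDual ℝ E, (∀ q ∈ A, 1 ≤ f q) ∧ f u = 1 := by
  let C : ProperCone ℝ E := ⟨hull ℝ ((· - u) '' A), isClosed_hull_image_finset _ _⟩
  have hC : -u ∉ C := fun h => by
    obtain ⟨s, hs0, hs1, hsu⟩ := exists_smul_mem_convexHull_of_neg_mem_hull hu h
    exact hmin s hs0 hs1 hsu
  obtain ⟨f, hfC, hfu⟩ := C.hyperplane_separation_point hC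
  have hfu : 0 < f u := by simpa using hfu
  have hfq : ∀ q ∈ A, f u ≤ f q := fun q hq => by
    simpa using hfC (q - u) (Submodule.subset_span (mem_image_of_mem _ hq))
  refine ⟨(f u)⁻¹ • f, fun q hq => ?_, by simp [hfu.ne']⟩
  simpa [le_inv_mul_iff₀ hfu] using hfq q hq

theorem mem_convexHull_filter_eq_one {A : Finset E} {f : StrongDual ℝ E}
    (hf : ∀ q ∈ A, 1 ≤ f q) {u : E} (hu : u ∈ convexHull ℝ (A : Set E)) (hfu : f u = 1) :
    u ∈ convexHull ℝ (A.filter (f · = 1) : Set E) := by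
  obtain ⟨w, hw0, hw1, rfl⟩ := Finset.mem_convexHull.1 hu
  have hsum : ∑ q ∈ A, w q * (f q - 1) = 0 := by
    rw [Finset.centerMass_eq_of_sum_1 _ _ hw1, map_sum] at hfu
    simp only [mul_sub, mul_one, Finset.sum_sub_distrib, hw1, id, map_smul, smul_eq_mul] at hfu ⊢
    linarith
  have htight : ∀ q ∈ A, w q ≠ 0 → f q = 1 := fun q hq hwq => by
    have := (Finset.sum_eq_zero_iff_of_nonneg fun q hq =>
      mul_nonneg (hw0 q hq) (sub_nonneg.2 (hf q hq))).1 hsum q hq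
    linarith [(mul_eq_zero.1 this).resolve_left hwq]
  rw [← Finset.centerMass_filter_ne_zero]
  refine Finset.centerMass_mem_convexHull _ (fun q hq => hw0 q (Finset.mem_filter.1 hq).1) ?_
    fun q hq => ?_
  · rw [Finset.sum_filter_ne_zero, hw1]; exact one_pos
  · obtain ⟨hqA, hwq⟩ := Finset.mem_filter.1 hq
    exact Finset.mem_filter.2 ⟨hqA, htight q hqA hwq⟩

theorem IsClosed.exists_least_smul_mem {K : Set E} (hK : IsClosed K) (h0 : (0 : E) ∉ K)
    {w : E} (hw : w ∈ K) :
    ∃ t : ℝ, 0 < t ∧ t • w ∈ K ∧ ∀ s : ℝ, 0 ≤ s → s < 1 → s • t • w ∉ K := by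
  have hS : IsClosed {s : ℝ | s • w ∈ K} := hK.preimage (continuous_id.smul continuous_const)
  obtain ⟨t, ⟨⟨ht0, ht1⟩, htw⟩, hleast⟩ := (isCompact_Icc.inter_right hS).exists_isLeast
    ⟨1, ⟨zero_le_one, le_rfl⟩, by simpa using hw⟩
  have htpos : 0 < t := ht0.lt_of_ne (by rintro rfl; exact h0 (by simpa using htw))
  refine ⟨t, htpos, htw, fun s hs0 hs1 hs => ?_⟩
  have := hleast ⟨⟨mul_nonneg hs0 ht0, by nlinarith⟩, by simpa [smul_smul] using hs⟩
  nlinarith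

theorem convexHull_insert_zero_inter_subset {A : Finset E}
    (h0 : (0 : E) ∉ convexHull ℝ (A : Set E)) {F : Set (StrongDual ℝ E)}
    (hF : ∀ T ⊆ A, (∃ f : StrongDual ℝ E, (∀ q ∈ A, 1 ≤ f q) ∧ ∀ q ∈ T, f q = 1) →
      ∃ f ∈ F, (∀ q ∈ A, 1 ≤ f q) ∧ ∀ q ∈ T, f q = 1) :
    convexHull ℝ (insert 0 A) ∩ ⋂ f ∈ F, {z | 1 ≤ f z} ⊆ convexHull ℝ (A : Set E) := by
  rintro z ⟨hz, hzF⟩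
  simp only [mem_iInter₂, mem_ofPred_eq] at hzF
  rcases (A : Set E).eq_empty_or_nonempty with hA | hA
  · obtain rfl := Finset.coe_eq_empty.1 hA
    obtain ⟨g, hgF, -⟩ := hF ∅ (Finset.empty_subset _) ⟨0, by simp⟩
    rw [Finset.coe_empty, insert_empty_eq, convexHull_singleton, mem_singleton_iff] at hz
    exact absurd (hzF g hgF) (by simp [hz])
  rw [convexHull_insert hA, mem_convexJoin] at hz
  obtain ⟨_, rfl, w, hw, hzw⟩ := hz
  obtain ⟨θ, ⟨-, hθ1⟩, rfl⟩ : ∃ θ ∈ Icc (0 : ℝ) 1, θ • w = z := by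
    simpa [segment_eq_image] using hzw
  obtain ⟨t, htpos, htw, hleast⟩ :=
    (A.finite_toSet.isClosed_convexHull ℝ).exists_least_smul_mem h0 hw
  obtain ⟨f, hfA, hfu⟩ := exists_one_le_and_eq_one_of_smul_notMem_convexHull htw hleast
  obtain ⟨g, hgF, -, hgT⟩ := hF (A.filter (f · = 1)) (Finset.filter_subset _ _)
    ⟨f, hfA, fun q hq => (Finset.mem_filter.1 hq).2⟩
  have hgu : g (t • w) = 1 :=
    convexHull_min (fun q hq => hgT q hq) (convex_hyperplane g.isLinear 1)
      (mem_convexHull_filter_eq_one hfA htw hfu)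
  have hθt : t ≤ θ := by
    have hcut := hzF g hgF
    simp only [map_smul, smul_eq_mul] at hcut hgu
    nlinarith
  have hray : Convex ℝ {s : ℝ | s • w ∈ convexHull ℝ (A : Set E)} :=
    (convex_convexHull ℝ _).linear_preimage (LinearMap.toSpanSingleton ℝ E w)
  exact hray.ordConnected.out htw (by simpa using hw) ⟨hθt, hθ1⟩

theorem exists_finset_convexHull_eq_inter {A : Set E} (hA : A.Finite) :
    ∃ F : Finset (StrongDual ℝ E),
      convexHull ℝ A = convexHull ℝ (insert 0 A) ∩ ⋂ f ∈ F, {z | 1 ≤ f z} := by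
  classical
  lift A to Finset E using hA
  by_cases h0 : (0 : E) ∈ convexHull ℝ (A : Set E)
  · refine ⟨∅, ?_⟩
    simp only [Finset.notMem_empty, iInter_of_empty, iInter_univ, inter_univ]
    exact (convexHull_mono (subset_insert _ _)).antisymm
      (convexHull_min (insert_subset h0 (subset_convexHull ℝ _)) (convex_convexHull ℝ _))
  let S := A.powerset.filter fun T => ∃ f : StrongDual ℝ E, (∀ q ∈ A, 1 ≤ f q) ∧ ∀ q ∈ T, f q = 1
  choose! f hf using fun T (hT : T ∈ S) => (Finset.mem_filter.1 hT).2
  refine ⟨S.image f, Subset.antisymm (subset_inter (convexHull_mono (subset_insert _ _)) ?_)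
    (convexHull_insert_zero_inter_subset h0 fun T hTA hT => ?_)⟩
  · simp only [subset_iInter_iff, Finset.mem_image]
    rintro _ ⟨T, hT, rfl⟩
    exact convexHull_min (hf T hT).1 (convex_halfSpace_ge (f T).isLinear 1)
  · have hTS : T ∈ S := Finset.mem_filter.2 ⟨Finset.mem_powerset.2 hTA, hT⟩
    exact ⟨f T, Finset.mem_image_of_mem f hTS, hf T hTS⟩

end

theorem StrongDual.apply_eq_sum_apply_single_mul {ι : Type*} [Fintype ι] [DecidableEq ι]
    (f : StrongDual ℝ (ι → ℝ)) (z : ι → ℝ) : f z = ∑ i, f (Pi.single i 1) * z i := by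
  conv_lhs => rw [← Finset.univ_sum_single z, map_sum]
  refine Finset.sum_congr rfl fun i _ => ?_
  rw [mul_comm, ← smul_eq_mul, ← map_smul, ← Pi.single_smul', smul_eq_mul, mul_one]

theorem statement0_general (p : ℕ) (Q : Set (Fin p → ℝ)) (hQfin : Q.Finite) :
    ∃ F : Finset (Fin p → ℝ),
      convexHull ℝ (Q \ {0}) =
        convexHull ℝ Q ∩ ⋂ π ∈ F, {z : Fin p → ℝ | 1 ≤ ∑ i, π i * z i} := by
  classical
  obtain ⟨F, hF⟩ := exists_finset_convexHull_eq_inter (hQfin.sdiff (t := {0}))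
  refine ⟨F.image fun f i => f (Pi.single i 1), ?_⟩
  have hcut : ⋂ π ∈ F.image fun f i => f (Pi.single i 1),
      {z : Fin p → ℝ | 1 ≤ ∑ i, π i * z i} = ⋂ f ∈ F, {z | 1 ≤ f z} := by
    simp only [Finset.set_biInter_finset_image, ← StrongDual.apply_eq_sum_apply_single_mul]
  rw [hcut]
  refine Subset.antisymm (subset_inter (convexHull_mono sdiff_subset)
    (hF.subset.trans inter_subset_right)) ?_
  rw [hF]
  exact inter_subset_inter_left _ (convexHull_mono (subset_insert_sdiff_singleton _ _))

/-- For a nonempty finite set `Q ⊆ {0,1}^p` (viewed in ℝ^p) with `Q⁰ = Q \ {0}`,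
there is a finite set `F ⊆ ℝ^p` with
`conv(Q⁰) = conv(Q) ∩ ⋂_{π ∈ F} {z : πᵀz ≥ 1}`. -/
theorem statement0 (p : ℕ) (hp : 1 ≤ p) (Q : Set (Fin p → ℝ))
    (hQbin : Q ⊆ {z | ∀ i, z i = 0 ∨ z i = 1})
    (hQne : Q.Nonempty) (hQfin : Q.Finite) :
    ∃ F : Finset (Fin p → ℝ),
      convexHull ℝ (Q \ {0}) =
        convexHull ℝ Q ∩ ⋂ π ∈ F, {z : Fin p → ℝ | 1 ≤ ∑ i, π i * z i} :=
  statement0_general p Q hQfin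
end

section
/- Let Q ⊆ {0,1}^p, let f : ℝ → ℝ be convex with f(0) = 0, and let F ⊆ ℝ^p be any finite set such that conv(Q \ {0}) = conv(Q) ∩ ⋂_{π ∈ F} {z : π^⊤ z ≥ 1}. Then for every (z, β, t) ∈ Z_Q and every π ∈ F, the inequality t ≥ (π^⊤ z)·f(𝟙^⊤β / (π^⊤ z)) holds, where the left-hand perspective value at π^⊤ z = 0 is interpreted via the limit convention. -/
open Filter

/-- The perspective value `w·f(x/w)`, valued in `EReal`, where at `w ≤ 0` (only `w = 0` is ever
used) the value is interpreted via the limit convention `0·f(x/0) = lim_{w→0⁺} w·f(x/w)`. -/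
noncomputable def persp (f : ℝ → ℝ) (x w : ℝ) : EReal :=
  if 0 < w then ((w * f (x / w) : ℝ) : EReal)
  else Filter.limsup (fun v : ℝ => ((v * f (x / v) : ℝ) : EReal)) (nhdsWithin 0 (Set.Ioi 0))

/-- The set `Z_Q = {(z,β,t) : z ∈ Q, f(𝟙ᵀβ) ≤ t, βᵢ(1-zᵢ) = 0 ∀i}`. -/
def ZQ (p : ℕ) (Q : Set (Fin p → ℝ)) (f : ℝ → ℝ) :
    Set ((Fin p → ℝ) × (Fin p → ℝ) × ℝ) :=
  {x | x.1 ∈ Q ∧ f (∑ i, x.2.1 i) ≤ x.2.2 ∧ ∀ i, x.2.1 i * (1 - x.1 i) = 0}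

/-- validity of the perspective-type inequalities
`t ≥ (πᵀz)·f(𝟙ᵀβ/(πᵀz))` for `(z,β,t) ∈ Z_Q` and `π ∈ F`. -/
theorem statement2 (p : ℕ) (Q : Set (Fin p → ℝ))
    (hQbin : Q ⊆ {z | ∀ i, z i = 0 ∨ z i = 1})
    (f : ℝ → ℝ) (hf : ConvexOn ℝ Set.univ f) (hf0 : f 0 = 0)
    (F : Finset (Fin p → ℝ))
    (hF : convexHull ℝ (Q \ {0}) =
        convexHull ℝ Q ∩ ⋂ π ∈ F, {z : Fin p → ℝ | 1 ≤ ∑ i, π i * z i}) :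
    ∀ z β t, (z, β, t) ∈ ZQ p Q f → ∀ π ∈ F,
      persp f (∑ i, β i) (∑ i, π i * z i) ≤ (t : EReal) := by
  rintro z β t ⟨hzQ, hft, hcomp⟩ π hπ
  by_cases hz : z = 0
  · -- z = 0 : then β = 0 and πᵀz = 0
    have hβ : ∀ i, β i = 0 := by
      intro i
      have := hcomp i
      simp [hz] at this
      exact this
    have hs : (∑ i, π i * z i) = 0 := by simp [hz]
    have hx : (∑ i, β i) = 0 := by simp [hβ]
    have ht0 : (0 : ℝ) ≤ t := by
      have := hft
      rw [hx, hf0] at this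
      exact this
    rw [hx, hs, persp]
    simp only [lt_self_iff_false, if_false]
    have : (fun v : ℝ => ((v * f (0 / v) : ℝ) : EReal)) = fun _ : ℝ => (0 : EReal) := by
      funext v
      simp [hf0]
    rw [this, Filter.limsup_const]
    exact_mod_cast ht0
  · -- z ≠ 0 : then πᵀz ≥ 1
    set s := ∑ i, π i * z i with hs
    have hz1 : z ∈ convexHull ℝ (Q \ {0}) :=
      subset_convexHull ℝ _ ⟨hzQ, hz⟩
    have hge : 1 ≤ s := by
      rw [hF] at hz1
      have := hz1.2
      have := Set.mem_iInter.mp this π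
      have := Set.mem_iInter.mp this hπ
      exact this
    have hspos : 0 < s := lt_of_lt_of_le one_pos hge
    rw [persp, if_pos hspos]
    set x := ∑ i, β i with hxdef
    -- convexity gives f(x/s) ≤ f(x)/s
    have ha : (0 : ℝ) ≤ 1 / s := by positivity
    have hb : (0 : ℝ) ≤ 1 - 1 / s := by
      have : 1 / s ≤ 1 := by
        rw [div_le_one hspos]; exact hge
      linarith
    have hab : 1 / s + (1 - 1 / s) = 1 := by ring
    have hconv := hf.2 (Set.mem_univ x) (Set.mem_univ (0 : ℝ)) ha hb hab
    have heq : (1 / s) • x + (1 - 1 / s) • (0 : ℝ) = x / s := by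
      simp [smul_eq_mul]; ring
    rw [heq, hf0] at hconv
    have : s * f (x / s) ≤ t := by
      have h1 : s * f (x / s) ≤ s * (1 / s * f x) := by
        apply mul_le_mul_of_nonneg_left _ hspos.le
        simpa using hconv
      have h2 : s * (1 / s * f x) = f x := by
        field_simp
      calc s * f (x / s) ≤ f x := by rw [h2] at h1; exact h1
        _ ≤ t := hft
    exact_mod_cast this
end

section
/- Let Q ⊆ {0,1}^p, let f : ℝ → ℝ be convex with f(0) = 0, assume that for every i ∈ [p] there exists z ∈ Q with z_i = 1, and assume the graph G_Q is connected. Let F ⊆ ℝ^p be any finite set such that conv(Q \ {0}) = conv(Q) ∩ ⋂_{π ∈ F} {z : π^⊤ z ≥ 1}. Then the closure of the convex hull of Z_Q equals {(z, β, t) ∈ [0,1]^p × ℝ^p × ℝ : z ∈ conv(Q), t ≥ f(𝟙^⊤β), and t ≥ (π^⊤ z)·f(𝟙^⊤β / (π^⊤ z)) for all π ∈ F}, where perspective values at π^⊤ z = 0 are interpreted via the limit convention. -/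
open Filter

/-- The graph `G_Q` on `[p]` with an edge `{i,j}`, `i ≠ j`, whenever some `z ∈ Q`
has `z_i = z_j = 1`. -/
def GQ (p : ℕ) (Q : Set (Fin p → ℝ)) : SimpleGraph (Fin p) :=
  SimpleGraph.fromRel (fun i j => ∃ z ∈ Q, z i = 1 ∧ z j = 1)

/-!
Because `f` is convex with `f 0 = 0`, the map `w ↦ w f(σ/w)` is antitone on `(0, ∞)`, and the
closed perspective `w f(σ/w)` (`w ≥ 0`) is the supremum of `aσ + bw` over the affine minorants
`au + b ≤ f u`. Every constraint on the right-hand side is therefore an intersection of closed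
half-spaces, and each of them contains `Z_Q` because `πᵀz ≥ 1` for `z ∈ Q \ {0}`.

Conversely let `c = min (1, min_{π ∈ F} πᵀz)`. Then `z = c y` with `y ∈ conv (Q \ {0})`, `0 ∈ Q`
if `c < 1`, and the constraints say `t ≥ c f(𝟙ᵀβ/c)`. Every nonzero point of `Q` has a coordinate
equal to `1` on which any value of `𝟙ᵀβ` may be placed, so `(y, b, f(𝟙ᵀβ/w)) ∈ conv Z_Q` for some
`b` with `𝟙ᵀb = 𝟙ᵀβ/w`. An edge `{i, j}` of `G_Q` gives `(ζ, r(e_i - e_j), 0) ∈ Z_Q` for all `r`;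
as `G_Q` is connected these vectors span `{v | 𝟙ᵀv = 0}`, so `conv Z_Q` contains a point
`(ζ, v, 0)` for each such `v`. A combination with weights `w` and `δ` of these two points (and of the
origin) corrects `w b` to `β`, and letting `w → c`, `δ → 0` puts `(z, β, t)` in the closure.
-/

open Set Topology
open scoped Pointwise

section Convex

variable {E : Type*} [AddCommGroup E] [Module ℝ E]

theorem Convex.smul_mem_of_le_one {K : Set E} (hK : Convex ℝ K) {x : E} (hx : x ∈ K) {r : ℝ}
    (hr : r ∈ Icc (0 : ℝ) 1) (h0 : r < 1 → (0 : E) ∈ K) : r • x ∈ K := by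
  rcases hr.2.lt_or_eq with hr1 | rfl
  · exact hK.smul_mem_of_zero_mem (h0 hr1) hx hr
  · rwa [one_smul]

theorem Convex.smul_add_smul_mem_of_add_le_one {K : Set E} (hK : Convex ℝ K) {x y : E}
    (hx : x ∈ K) (hy : y ∈ K) {a b : ℝ} (ha : 0 ≤ a) (hb : 0 ≤ b) (hab : a + b ≤ 1)
    (h0 : a + b < 1 → (0 : E) ∈ K) : a • x + b • y ∈ K := by
  rcases (add_nonneg ha hb).eq_or_lt with hab0 | hpos
  · obtain ⟨rfl, rfl⟩ : a = 0 ∧ b = 0 := ⟨by linarith, by linarith⟩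
    simpa using h0 (by simp)
  have hcomb : (a / (a + b)) • x + (b / (a + b)) • y ∈ K :=
    hK hx hy (by positivity) (by positivity) (by field_simp)
  convert hK.smul_mem_of_le_one hcomb ⟨hpos.le, hab⟩ h0 using 1
  rw [smul_add, smul_smul, smul_smul, mul_div_cancel₀ _ hpos.ne', mul_div_cancel₀ _ hpos.ne']

theorem exists_eq_smul_of_mem_convexHull {Q : Set E} (hQ : (Q \ {0}).Nonempty) {z : E}
    (hz : z ∈ convexHull ℝ Q) :
    ∃ θ ∈ Icc (0 : ℝ) 1, ∃ y ∈ convexHull ℝ (Q \ {0}), z = θ • y ∧ (θ < 1 → (0 : E) ∈ Q) := by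
  by_cases h0 : (0 : E) ∈ Q
  · rw [← insert_sdiff_self_of_mem h0, convexHull_insert hQ, mem_convexJoin] at hz
    obtain ⟨_, rfl, y, hy, hzy⟩ := hz
    obtain ⟨a, θ, ha, hθ, hab, rfl⟩ := hzy
    exact ⟨θ, ⟨hθ, by linarith⟩, y, hy, by simp, fun _ => h0⟩
  · exact ⟨1, ⟨zero_le_one, le_rfl⟩, z, by rwa [sdiff_singleton_eq_self h0], (one_smul ℝ z).symm,
      fun h => absurd h (lt_irrefl 1)⟩

theorem closure_convexHull_subset_setOf_le [TopologicalSpace E] {s : Set E} {g : E → ℝ}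
    (hg : IsLinearMap ℝ g) (hgc : Continuous g) {r : ℝ} (hs : ∀ x ∈ s, g x ≤ r) :
    closure (convexHull ℝ s) ⊆ {x | g x ≤ r} :=
  closure_minimal (convexHull_min hs (convex_halfSpace_le hg r)) (isClosed_le hgc continuous_const)

theorem Convex.span_subset_of_forall_smul_mem {V D : Set E} (hV : Convex ℝ V) (h0 : (0 : E) ∈ V)
    (hD : ∀ u ∈ D, ∀ r : ℝ, r • u ∈ V) : (Submodule.span ℝ D : Set E) ⊆ V := by
  intro v hv
  suffices ∀ r : ℝ, r • v ∈ V by simpa using this 1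
  induction hv using Submodule.span_induction with
  | mem u hu => exact hD u hu
  | zero => simpa using h0
  | add x y _ _ hx hy =>
    intro r
    have := hV (hx (2 * r)) (hy (2 * r)) (by norm_num : (0 : ℝ) ≤ 1 / 2)
      (by norm_num : (0 : ℝ) ≤ 1 / 2) (by norm_num)
    rwa [smul_smul, smul_smul, show (1 / 2 : ℝ) * (2 * r) = r by ring, ← smul_add] at this
  | smul a x _ hx => exact fun r => by simpa [smul_smul] using hx (r * a)

end Convex

namespace SimpleGraph

variable {V R : Type*} [DecidableEq V] [Ring R] {G : SimpleGraph V}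

theorem Reachable.single_sub_single_mem_span {i j : V} (h : G.Reachable i j) :
    Pi.single i (1 : R) - Pi.single j 1 ∈
      Submodule.span R {u : V → R | ∃ a b, G.Adj a b ∧ Pi.single a 1 - Pi.single b 1 = u} := by
  obtain ⟨w⟩ := h
  induction w with
  | nil => simp
  | @cons i k j hik _ ih =>
    rw [← sub_add_sub_cancel _ (Pi.single k (1 : R))]
    exact add_mem (Submodule.subset_span ⟨i, k, hik, rfl⟩) ih

theorem Connected.mem_span_of_sum_eq_zero [Fintype V] (hG : G.Connected) {v : V → R}
    (hv : ∑ i, v i = 0) :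
    v ∈ Submodule.span R {u : V → R | ∃ a b, G.Adj a b ∧ Pi.single a 1 - Pi.single b 1 = u} := by
  obtain ⟨i₀⟩ := hG.nonempty
  have hsum : v = ∑ i, v i • (Pi.single i (1 : R) - Pi.single i₀ 1) := by
    simp only [smul_sub, Finset.sum_sub_distrib, ← Finset.sum_smul, hv, zero_smul, sub_zero]
    exact pi_eq_sum_univ' v
  rw [hsum]
  exact Submodule.sum_mem _ fun i _ =>
    Submodule.smul_mem _ _ (Reachable.single_sub_single_mem_span (hG i i₀))

end SimpleGraph

namespace ConvexOn

variable {f : ℝ → ℝ}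

theorem exists_affine_le_eq (hf : ConvexOn ℝ univ f) (x₀ : ℝ) :
    ∃ a b : ℝ, (∀ u, a * u + b ≤ f u) ∧ a * x₀ + b = f x₀ := by
  have hx₀ : x₀ ∈ interior univ := by simp
  refine ⟨derivWithin f (Ioi x₀) x₀, f x₀ - derivWithin f (Ioi x₀) x₀ * x₀, fun u => ?_, by ring⟩
  rcases lt_trichotomy u x₀ with hu | rfl | hu
  · have h := (hf.slope_le_leftDeriv_of_mem_interior (mem_univ u) hx₀ hu).trans
      (hf.leftDeriv_le_rightDeriv_of_mem_interior hx₀)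
    rw [slope_def_field, div_le_iff₀ (by linarith)] at h
    linarith
  · linarith
  · have h := hf.rightDeriv_le_slope_of_mem_interior hx₀ (mem_univ u) hu
    rw [slope_def_field, le_div_iff₀ (by linarith)] at h
    linarith

theorem mul_apply_div_antitoneOn (hf : ConvexOn ℝ univ f) (hf0 : f 0 = 0) (σ : ℝ) :
    AntitoneOn (fun w => w * f (σ / w)) (Ioi 0) := by
  intro a (ha : 0 < a) b (hb : 0 < b) hab
  have key : f (σ / b) ≤ (a / b) * f (σ / a) := by
    have h := hf.2 (mem_univ (σ / a)) (mem_univ 0) (div_nonneg ha.le hb.le)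
      (sub_nonneg.2 ((div_le_one hb).2 hab)) (add_sub_cancel _ _)
    simp only [smul_eq_mul, hf0, mul_zero, add_zero] at h
    rwa [div_mul_div_comm, mul_comm a σ, mul_div_mul_right _ _ ha.ne'] at h
  calc b * f (σ / b) ≤ b * ((a / b) * f (σ / a)) := mul_le_mul_of_nonneg_left key hb.le
    _ = a * f (σ / a) := by field_simp

end ConvexOn

section Perspective

variable {f : ℝ → ℝ} {σ w t : ℝ}

theorem persp_of_pos (hw : 0 < w) : persp f σ w = ((w * f (σ / w) : ℝ) : EReal) := if_pos hw

theorem persp_one : persp f σ 1 = f σ := by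
  rw [persp_of_pos one_pos, one_mul, div_one]

theorem persp_zero_le_iff (hf : ConvexOn ℝ univ f) (hf0 : f 0 = 0) :
    persp f σ 0 ≤ t ↔ ∀ v, 0 < v → v * f (σ / v) ≤ t := by
  rw [persp, if_neg (lt_irrefl 0)]
  constructor
  · intro h v hv
    have hle : ∀ᶠ u in 𝓝[>] (0 : ℝ),
        ((v * f (σ / v) : ℝ) : EReal) ≤ ((u * f (σ / u) : ℝ) : EReal) := by
      filter_upwards [Ioo_mem_nhdsGT hv] with u hu
      exact EReal.coe_le_coe_iff.2 (hf.mul_apply_div_antitoneOn hf0 σ hu.1 hv hu.2.le)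
    exact EReal.coe_le_coe_iff.1 <|
      ((le_liminf_of_le (by isBoundedDefault) hle).trans liminf_le_limsup).trans h
  · intro h
    refine limsup_le_of_le (by isBoundedDefault) ?_
    filter_upwards [self_mem_nhdsWithin] with u hu
    exact EReal.coe_le_coe_iff.2 (h u hu)

theorem affine_le_mul_apply_div {a b v : ℝ} (hab : ∀ u, a * u + b ≤ f u) (hv : 0 < v) :
    a * σ + b * v ≤ v * f (σ / v) := by
  calc a * σ + b * v = v * (a * (σ / v) + b) := by field_simp
    _ ≤ v * f (σ / v) := mul_le_mul_of_nonneg_left (hab _) hv.le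

theorem exists_affine_le_eq_mul_apply_div (hf : ConvexOn ℝ univ f) {v : ℝ} (hv : 0 < v) :
    ∃ a b : ℝ, (∀ u, a * u + b ≤ f u) ∧ a * σ + b * v = v * f (σ / v) := by
  obtain ⟨a, b, hab, heq⟩ := hf.exists_affine_le_eq (σ / v)
  refine ⟨a, b, hab, ?_⟩
  rw [← heq]
  field_simp

theorem persp_le_iff (hf : ConvexOn ℝ univ f) (hf0 : f 0 = 0) (hw : 0 ≤ w) :
    persp f σ w ≤ t ↔ ∀ a b : ℝ, (∀ u, a * u + b ≤ f u) → a * σ + b * w ≤ t := by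
  rcases hw.eq_or_lt with rfl | hw
  · rw [persp_zero_le_iff hf hf0]
    constructor
    · intro h a b hab
      have hlim : Tendsto (fun v => a * σ + b * v) (𝓝[>] 0) (𝓝 (a * σ + b * 0)) :=
        ((continuous_const.add (continuous_const_mul b)).tendsto 0).mono_left nhdsWithin_le_nhds
      refine le_of_tendsto hlim ?_
      filter_upwards [self_mem_nhdsWithin] with v hv
      exact (affine_le_mul_apply_div hab hv).trans (h v hv)
    · intro h v hv
      obtain ⟨a, b, hab, heq⟩ := exists_affine_le_eq_mul_apply_div (σ := σ) hf hv
      have hb : b ≤ 0 := by simpa [hf0] using hab 0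
      have := h a b hab
      nlinarith
  · rw [persp_of_pos hw, EReal.coe_le_coe_iff]
    constructor
    · exact fun h a b hab => (affine_le_mul_apply_div hab hw).trans h
    · intro h
      obtain ⟨a, b, hab, heq⟩ := exists_affine_le_eq_mul_apply_div (σ := σ) hf hw
      exact heq ▸ h a b hab

theorem tendsto_max_mul_apply_div (hf : ConvexOn ℝ univ f) (hf0 : f 0 = 0) {α : Type*}
    {l : Filter α} {w : α → ℝ} {c : ℝ} (hw : Tendsto w l (𝓝 c)) (hwpos : ∀ᶠ x in l, 0 < w x)
    (hc : 0 ≤ c) (ht : persp f σ c ≤ t) :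
    Tendsto (fun x => max t (w x * f (σ / w x))) l (𝓝 t) := by
  rcases hc.eq_or_lt with rfl | hc
  · rw [persp_zero_le_iff hf hf0] at ht
    refine tendsto_const_nhds.congr' ?_
    filter_upwards [hwpos] with x hx
    exact (max_eq_left (ht _ hx)).symm
  · rw [persp_of_pos hc, EReal.coe_le_coe_iff] at ht
    have hcont : ContinuousAt (fun v => v * f (σ / v)) c := by
      have := continuousOn_univ.1 (hf.continuousOn isOpen_univ)
      fun_prop (disch := exact hc.ne')
    simpa only [max_eq_left ht, Function.comp_def] using
      (tendsto_const_nhds (x := t)).max (hcont.tendsto.comp hw)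

end Perspective

section ZQ

variable {p : ℕ} {Q : Set (Fin p → ℝ)} {f : ℝ → ℝ}

theorem finite_of_subset_binary (hQ : Q ⊆ {z | ∀ i, z i = 0 ∨ z i = 1}) : Q.Finite :=
  (Set.Finite.pi fun _ => (finite_singleton (1 : ℝ)).insert 0).subset
    fun _ hz i _ => hQ hz i

theorem convexHull_subset_Icc_of_subset_binary (hQ : Q ⊆ {z | ∀ i, z i = 0 ∨ z i = 1}) :
    convexHull ℝ Q ⊆ Icc 0 1 :=
  convexHull_min (fun z hz => ⟨fun i => by rcases hQ hz i with h | h <;> simp [h],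
    fun i => by rcases hQ hz i with h | h <;> simp [h]⟩) (convex_Icc 0 1)

theorem fst_mem_convexHull_of_mem_convexHull_ZQ {x : (Fin p → ℝ) × (Fin p → ℝ) × ℝ}
    (hx : x ∈ convexHull ℝ (ZQ p Q f)) : x.1 ∈ convexHull ℝ Q :=
  convexHull_min (fun _ (hy : _ ∈ ZQ p Q f) => subset_convexHull ℝ Q hy.1)
    ((convex_convexHull ℝ Q).linear_preimage (LinearMap.fst ℝ _ _)) hx

theorem fst_mem_convexHull_of_mem_closure_convexHull_ZQ (hQ : Q.Finite)
    {x : (Fin p → ℝ) × (Fin p → ℝ) × ℝ} (hx : x ∈ closure (convexHull ℝ (ZQ p Q f))) :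
    x.1 ∈ convexHull ℝ Q :=
  closure_minimal (fun _ => fst_mem_convexHull_of_mem_convexHull_ZQ)
    ((hQ.isClosed_convexHull ℝ).preimage continuous_fst) hx

theorem mk_mem_convexHull_ZQ_of_le {z β : Fin p → ℝ} {s t : ℝ}
    (hx : (z, β, s) ∈ convexHull ℝ (ZQ p Q f)) (hst : s ≤ t) :
    (z, β, t) ∈ convexHull ℝ (ZQ p Q f) := by
  have hshift : ZQ p Q f + ({(0, 0, t - s)} : Set ((Fin p → ℝ) × (Fin p → ℝ) × ℝ)) ⊆ ZQ p Q f := by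
    rintro _ ⟨x, ⟨hxQ, hxf, hxβ⟩, _, rfl, rfl⟩
    exact ⟨by simpa using hxQ, by simp; linarith, by simpa using hxβ⟩
  have hsum := add_mem_add hx
    (subset_convexHull ℝ _ (mem_singleton ((0 : Fin p → ℝ), (0 : Fin p → ℝ), t - s)))
  rw [← convexHull_add] at hsum
  simpa using convexHull_mono hshift hsum

theorem affine_le_of_mem_ZQ (hf : ConvexOn ℝ univ f) (hf0 : f 0 = 0) {κ : ℝ} {π : Fin p → ℝ}
    (hκ : 0 ≤ κ) (hℓ : ∀ z ∈ Q, z ≠ 0 → 1 ≤ κ + π ⬝ᵥ z) {a b : ℝ} (hab : ∀ u, a * u + b ≤ f u)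
    {x : (Fin p → ℝ) × (Fin p → ℝ) × ℝ} (hx : x ∈ ZQ p Q f) :
    a * ∑ i, x.2.1 i + b * (κ + π ⬝ᵥ x.1) ≤ x.2.2 := by
  obtain ⟨z, β, t⟩ := x
  obtain ⟨hzQ, hft, hβ⟩ := hx
  by_cases hz : z = 0
  · subst hz
    obtain rfl : β = 0 := funext fun i => by simpa using hβ i
    have hb : b ≤ 0 := by simpa [hf0] using hab 0
    simp only [Pi.zero_apply, Finset.sum_const_zero, hf0, dotProduct_zero, add_zero] at hft ⊢
    nlinarith
  · have hw := hℓ z hzQ hz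
    calc a * ∑ i, β i + b * (κ + π ⬝ᵥ z)
        ≤ (κ + π ⬝ᵥ z) * f ((∑ i, β i) / (κ + π ⬝ᵥ z)) := affine_le_mul_apply_div hab (by linarith)
      _ ≤ 1 * f ((∑ i, β i) / 1) :=
          hf.mul_apply_div_antitoneOn hf0 _ (mem_Ioi.2 one_pos) (mem_Ioi.2 (one_pos.trans_le hw)) hw
      _ ≤ t := by simpa using hft

theorem persp_le_of_mem_closure_convexHull_ZQ (hf : ConvexOn ℝ univ f) (hf0 : f 0 = 0) {κ : ℝ}
    {π : Fin p → ℝ} (hκ : 0 ≤ κ)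
    (hℓ : ∀ z ∈ Q, z ≠ 0 → 1 ≤ κ + π ⬝ᵥ z) {x : (Fin p → ℝ) × (Fin p → ℝ) × ℝ}
    (hx : x ∈ closure (convexHull ℝ (ZQ p Q f))) (hw : 0 ≤ κ + π ⬝ᵥ x.1) :
    persp f (∑ i, x.2.1 i) (κ + π ⬝ᵥ x.1) ≤ x.2.2 := by
  rw [persp_le_iff hf hf0 hw]
  intro a b hab
  have hlin : IsLinearMap ℝ fun x : (Fin p → ℝ) × (Fin p → ℝ) × ℝ =>
      a * ∑ i, x.2.1 i + b * (π ⬝ᵥ x.1) - x.2.2 := by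
    constructor
    · intro x y
      simp only [Prod.fst_add, Prod.snd_add, Pi.add_apply, Finset.sum_add_distrib, dotProduct_add]
      ring
    · intro c x
      simp only [Prod.smul_fst, Prod.smul_snd, Pi.smul_apply, smul_eq_mul, ← Finset.mul_sum,
        dotProduct_smul]
      ring
  have hcont : Continuous fun x : (Fin p → ℝ) × (Fin p → ℝ) × ℝ =>
      a * ∑ i, x.2.1 i + b * (π ⬝ᵥ x.1) - x.2.2 := by
    unfold dotProduct
    fun_prop
  have h : a * ∑ i, x.2.1 i + b * (π ⬝ᵥ x.1) - x.2.2 ≤ -(b * κ) :=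
    closure_convexHull_subset_setOf_le hlin hcont
      (fun y hy => by linarith [affine_le_of_mem_ZQ hf hf0 hκ hℓ hab hy]) hx
  linarith

theorem exists_mk_mem_convexHull_ZQ_of_sum_eq_zero (hf0 : f 0 = 0) (hQ : Q.Nonempty)
    (hconn : (GQ p Q).Connected) {v : Fin p → ℝ} (hv : ∑ i, v i = 0) :
    ∃ ζ, (ζ, v, (0 : ℝ)) ∈ convexHull ℝ (ZQ p Q f) := by
  have hV : Convex ℝ {v | ∃ ζ, (ζ, v, (0 : ℝ)) ∈ convexHull ℝ (ZQ p Q f)} := by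
    rintro _ ⟨ζ₁, h₁⟩ _ ⟨ζ₂, h₂⟩ a b ha hb hab
    exact ⟨a • ζ₁ + b • ζ₂, by simpa using convex_convexHull ℝ _ h₁ h₂ ha hb hab⟩
  have h0 : (0 : Fin p → ℝ) ∈ {v | ∃ ζ, (ζ, v, (0 : ℝ)) ∈ convexHull ℝ (ZQ p Q f)} := by
    obtain ⟨z, hz⟩ := hQ
    exact ⟨z, subset_convexHull ℝ _ ⟨hz, by simp [hf0], by simp⟩⟩
  refine hV.span_subset_of_forall_smul_mem h0 ?_ (hconn.mem_span_of_sum_eq_zero hv)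
  rintro _ ⟨i, j, hij, rfl⟩ r
  obtain ⟨z, hzQ, hzi, hzj⟩ : ∃ z ∈ Q, z i = 1 ∧ z j = 1 := by
    obtain ⟨-, ⟨z, hz, h₁, h₂⟩ | ⟨z, hz, h₁, h₂⟩⟩ := (SimpleGraph.fromRel_adj _ _ _).1 hij
    exacts [⟨z, hz, h₁, h₂⟩, ⟨z, hz, h₂, h₁⟩]
  refine ⟨z, subset_convexHull ℝ _
    ⟨hzQ, by simp [mul_sub, Finset.sum_sub_distrib, ← Finset.mul_sum, hf0], fun k => ?_⟩⟩
  by_cases hki : k = i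
  · simp [hki, hzi]
  · by_cases hkj : k = j
    · simp [hkj, hzj]
    · simp [hki, hkj]

theorem exists_mk_mem_convexHull_ZQ_of_mem_convexHull_sdiff_zero
    (hQbin : Q ⊆ {z | ∀ i, z i = 0 ∨ z i = 1}) {y : Fin p → ℝ}
    (hy : y ∈ convexHull ℝ (Q \ {0})) (σ : ℝ) :
    ∃ b : Fin p → ℝ, ∑ i, b i = σ ∧ (y, b, f σ) ∈ convexHull ℝ (ZQ p Q f) := by
  refine convexHull_min
    (t := {y | ∃ b : Fin p → ℝ, ∑ i, b i = σ ∧ (y, b, f σ) ∈ convexHull ℝ (ZQ p Q f)}) ?_ ?_ hy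
  · rintro g ⟨hgQ, hg0⟩
    obtain ⟨i, hi⟩ : ∃ i, g i ≠ 0 := by
      by_contra! h
      exact hg0 (funext h)
    have hgi : g i = 1 := (hQbin hgQ i).resolve_left hi
    refine ⟨Pi.single i σ, by simp, subset_convexHull ℝ _ ⟨hgQ, by simp, fun k => ?_⟩⟩
    by_cases hk : k = i
    · simp [hk, hgi]
    · simp [hk]
  · rintro _ ⟨b₁, hb₁, h₁⟩ _ ⟨b₂, hb₂, h₂⟩ α β hα hβ hαβ
    refine ⟨α • b₁ + β • b₂, ?_, ?_⟩
    · simp [Finset.sum_add_distrib, ← Finset.mul_sum, hb₁, hb₂, ← add_mul, hαβ]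
    · convert convex_convexHull ℝ _ h₁ h₂ hα hβ hαβ using 1
      simp [← add_mul, hαβ]

theorem exists_smul_add_smul_mem_convexHull_ZQ (hQbin : Q ⊆ {z | ∀ i, z i = 0 ∨ z i = 1})
    (hf0 : f 0 = 0) (hconn : (GQ p Q).Connected) {y : Fin p → ℝ}
    (hy : y ∈ convexHull ℝ (Q \ {0})) (β : Fin p → ℝ) {w δ : ℝ} (hw : 0 < w) (hδ : 0 < δ)
    (hwδ : w + δ ≤ 1) (h0 : w + δ < 1 → (0 : Fin p → ℝ) ∈ Q) :
    ∃ ζ ∈ convexHull ℝ Q,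
      (w • y + δ • ζ, β, w * f ((∑ i, β i) / w)) ∈ convexHull ℝ (ZQ p Q f) := by
  obtain ⟨b, hb, hyb⟩ :=
    exists_mk_mem_convexHull_ZQ_of_mem_convexHull_sdiff_zero (f := f) hQbin hy ((∑ i, β i) / w)
  have hQ : Q.Nonempty := (convexHull_nonempty_iff.1 ⟨y, hy⟩).mono sdiff_subset
  obtain ⟨ζ, hζ⟩ := exists_mk_mem_convexHull_ZQ_of_sum_eq_zero hf0 hQ hconn
    (v := δ⁻¹ • (β - w • b))
    (by simp [← Finset.mul_sum, Finset.sum_sub_distrib, hb, mul_div_cancel₀ _ hw.ne'])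
  refine ⟨ζ, fst_mem_convexHull_of_mem_convexHull_ZQ hζ, ?_⟩
  convert (convex_convexHull ℝ (ZQ p Q f)).smul_add_smul_mem_of_add_le_one hyb hζ hw.le hδ.le hwδ
    (fun h => subset_convexHull ℝ _ ⟨h0 h, by simp [hf0], by simp⟩) using 1
  simp [smul_smul, hδ.ne']

theorem smul_mk_mem_closure_convexHull_ZQ (hQbin : Q ⊆ {z | ∀ i, z i = 0 ∨ z i = 1})
    (hf : ConvexOn ℝ univ f) (hf0 : f 0 = 0) (hconn : (GQ p Q).Connected) {c : ℝ}
    (hc : c ∈ Icc (0 : ℝ) 1) (hc0 : c < 1 → (0 : Fin p → ℝ) ∈ Q) {y : Fin p → ℝ}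
    (hy : y ∈ convexHull ℝ (Q \ {0})) {β : Fin p → ℝ} {t : ℝ}
    (ht : persp f (∑ i, β i) c ≤ t) :
    (c • y, β, t) ∈ closure (convexHull ℝ (ZQ p Q f)) := by
  -- `μ ε ∈ (0, 1]` is split as `w ε + ε μ ε`, with `w ε → c` and `ε μ ε → 0` as `ε → 0⁺`
  set μ : ℝ → ℝ := fun ε => (1 - ε) * c + ε
  set w : ℝ → ℝ := fun ε => (1 - ε) * μ ε
  have hμ : ∀ ε ∈ Ioo (0 : ℝ) 1, 0 < μ ε ∧ μ ε ≤ 1 ∧ (μ ε < 1 → c < 1) := by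
    rintro ε ⟨hε0, hε1⟩
    refine ⟨by nlinarith [hc.1], by nlinarith [hc.2], fun h => ?_⟩
    by_contra! h1
    nlinarith
  have hB : ∀ ε, ∃ ζ, ε ∈ Ioo (0 : ℝ) 1 → ζ ∈ convexHull ℝ Q ∧
      (w ε • y + (ε * μ ε) • ζ, β, w ε * f ((∑ i, β i) / w ε)) ∈ convexHull ℝ (ZQ p Q f) := by
    intro ε
    by_cases hε : ε ∈ Ioo (0 : ℝ) 1
    · obtain ⟨hμ0, hμ1, hμc⟩ := hμ ε hε
      obtain ⟨ζ, hζ, hmem⟩ := exists_smul_add_smul_mem_convexHull_ZQ hQbin hf0 hconn hy β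
        (mul_pos (sub_pos.2 hε.2) hμ0) (mul_pos hε.1 hμ0) (by linarith)
        (fun h => hc0 (hμc (by linarith)))
      exact ⟨ζ, fun _ => ⟨hζ, hmem⟩⟩
    · exact ⟨0, fun h => absurd h hε⟩
  choose ζ hζ using hB
  obtain ⟨R, hR⟩ :=
    ((finite_of_subset_binary hQbin).isCompact_convexHull ℝ).isBounded.exists_norm_le
  have hev : ∀ᶠ ε in 𝓝[>] (0 : ℝ), ε ∈ Ioo (0 : ℝ) 1 := Ioo_mem_nhdsGT one_pos
  have hcont : Continuous w := by fun_prop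
  have hw : Tendsto w (𝓝[>] 0) (𝓝 c) := by
    simpa [w, μ] using hcont.tendsto 0 |>.mono_left nhdsWithin_le_nhds
  refine mem_closure_of_tendsto (f := fun ε => (w ε • y + (ε * μ ε) • ζ ε, β,
    max t (w ε * f ((∑ i, β i) / w ε)))) (b := 𝓝[>] 0) ?_ ?_
  · refine Tendsto.prodMk_nhds ?_ (tendsto_const_nhds.prodMk_nhds
      (tendsto_max_mul_apply_div hf hf0 hw ?_ hc.1 ht))
    · have hδ : Tendsto (fun ε => ε * μ ε) (𝓝[>] 0) (𝓝 0) := by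
        have : Continuous fun ε => ε * μ ε := by fun_prop
        simpa using this.tendsto 0 |>.mono_left nhdsWithin_le_nhds
      have hζR : IsBoundedUnder (· ≤ ·) (𝓝[>] 0) (norm ∘ ζ) :=
        ⟨R, eventually_map.2 (hev.mono fun ε hε => hR _ (hζ ε hε).1)⟩
      simpa using (hw.smul_const y).add (hδ.zero_smul_isBoundedUnder_le hζR)
    · filter_upwards [hev] with ε hε
      exact mul_pos (sub_pos.2 hε.2) (hμ ε hε).1
  · filter_upwards [hev] with ε hε
    exact mk_mem_convexHull_ZQ_of_le (hζ ε hε).2 (le_max_right _ _)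

end ZQ

section Cuts

variable {p : ℕ} {Q : Set (Fin p → ℝ)} {F : Finset (Fin p → ℝ)}

theorem mem_convexHull_sdiff_zero_iff
    (hF : convexHull ℝ (Q \ {0}) =
        convexHull ℝ Q ∩ ⋂ π ∈ F, {z : Fin p → ℝ | 1 ≤ ∑ i, π i * z i}) {y : Fin p → ℝ} :
    y ∈ convexHull ℝ (Q \ {0}) ↔ y ∈ convexHull ℝ Q ∧ ∀ π ∈ F, 1 ≤ π ⬝ᵥ y := by
  rw [hF]
  simp [dotProduct]

theorem exists_isLeast_eq_smul
    (hF : convexHull ℝ (Q \ {0}) =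
        convexHull ℝ Q ∩ ⋂ π ∈ F, {z : Fin p → ℝ | 1 ≤ ∑ i, π i * z i})
    (hQ0 : (Q \ {0}).Nonempty) {z : Fin p → ℝ} (hz : z ∈ convexHull ℝ Q) :
    ∃ c, IsLeast (insert 1 ((fun π => π ⬝ᵥ z) '' F)) c ∧ 0 ≤ c ∧
      ∃ y ∈ convexHull ℝ (Q \ {0}), z = c • y ∧ (c < 1 → (0 : Fin p → ℝ) ∈ Q) := by
  obtain ⟨c, hc⟩ : ∃ c, IsLeast (insert 1 ((fun π => π ⬝ᵥ z) '' F)) c :=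
    ⟨_, ((F.finite_toSet.image _).insert 1).isCompact.isLeast_sInf (insert_nonempty _ _)⟩
  refine ⟨c, hc, ?_⟩
  have hc1 : c ≤ 1 := hc.2 (mem_insert 1 _)
  have hcπ : ∀ π ∈ F, c ≤ π ⬝ᵥ z := fun π hπ => hc.2 (mem_insert_of_mem _ ⟨π, hπ, rfl⟩)
  obtain ⟨θ, hθ, y₀, hy₀, rfl, hθ0⟩ := exists_eq_smul_of_mem_convexHull hQ0 hz
  have hθc : θ ≤ c := by
    obtain rfl | ⟨π, hπ, rfl⟩ := hc.1
    · exact hθ.2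
    · change θ ≤ π ⬝ᵥ θ • y₀
      rw [dotProduct_smul, smul_eq_mul]
      exact le_mul_of_one_le_right hθ.1 (((mem_convexHull_sdiff_zero_iff hF).1 hy₀).2 π hπ)
  refine ⟨hθ.1.trans hθc, ?_⟩
  rcases (hθ.1.trans hθc).eq_or_lt with rfl | hcpos
  · obtain rfl : θ = 0 := le_antisymm hθc hθ.1
    exact ⟨y₀, hy₀, rfl, hθ0⟩
  refine ⟨(θ / c) • y₀, (mem_convexHull_sdiff_zero_iff hF).2 ⟨?_, fun π hπ => ?_⟩, ?_,
    fun h => hθ0 (hθc.trans_lt h)⟩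
  · exact (convex_convexHull ℝ Q).smul_mem_of_le_one (convexHull_mono sdiff_subset hy₀)
      ⟨div_nonneg hθ.1 hcpos.le, (div_le_one hcpos).2 hθc⟩
      (fun h => subset_convexHull ℝ Q (hθ0 (((div_lt_one hcpos).1 h).trans_le hc1)))
  · have := hcπ π hπ
    rw [dotProduct_smul, smul_eq_mul] at this ⊢
    rw [div_mul_eq_mul_div, le_div_iff₀ hcpos]
    linarith
  · rw [smul_smul, mul_div_cancel₀ _ hcpos.ne']

end Cuts

/-- Theorem: the connected case: if `G_Q` is connected then
`clconv(Z_Q)` is described by `z ∈ conv(Q)`, `t ≥ f(𝟙ᵀβ)` and the inequalities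
`t ≥ (πᵀz)·f(𝟙ᵀβ/(πᵀz))`, `π ∈ F`. -/
theorem statement3 (p : ℕ) (Q : Set (Fin p → ℝ))
    (hQbin : Q ⊆ {z | ∀ i, z i = 0 ∨ z i = 1})
    (f : ℝ → ℝ) (hf : ConvexOn ℝ Set.univ f) (hf0 : f 0 = 0)
    (hone : ∀ i, ∃ z ∈ Q, z i = 1)
    (hconn : (GQ p Q).Connected)
    (F : Finset (Fin p → ℝ))
    (hF : convexHull ℝ (Q \ {0}) =
        convexHull ℝ Q ∩ ⋂ π ∈ F, {z : Fin p → ℝ | 1 ≤ ∑ i, π i * z i}) :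
    closure (convexHull ℝ (ZQ p Q f)) =
      {x : (Fin p → ℝ) × (Fin p → ℝ) × ℝ |
        (∀ i, x.1 i ∈ Set.Icc (0 : ℝ) 1) ∧ x.1 ∈ convexHull ℝ Q ∧
        f (∑ i, x.2.1 i) ≤ x.2.2 ∧
        ∀ π ∈ F, persp f (∑ i, x.2.1 i) (∑ i, π i * x.1 i) ≤ (x.2.2 : EReal)} := by
  have hQ0 : (Q \ {0}).Nonempty := by
    obtain ⟨i⟩ := hconn.nonempty
    obtain ⟨z, hz, hzi⟩ := hone i
    exact ⟨z, hz, fun h => by simp [mem_singleton_iff.1 h] at hzi⟩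
  ext ⟨z, β, t⟩
  constructor
  · intro hx
    have hz := fst_mem_convexHull_of_mem_closure_convexHull_ZQ (finite_of_subset_binary hQbin) hx
    obtain ⟨c, hc, hc0, -⟩ := exists_isLeast_eq_smul hF hQ0 hz
    have hbox := convexHull_subset_Icc_of_subset_binary hQbin hz
    refine ⟨fun i => ⟨hbox.1 i, hbox.2 i⟩, hz, ?_, fun π hπ => ?_⟩
    · -- `κ = 1`, `π = 0` turns the perspective constraint into the epigraph constraint
      simpa [persp_one] using persp_le_of_mem_closure_convexHull_ZQ hf hf0 zero_le_one (π := 0)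
        (fun _ _ _ => by simp) hx (by simp)
    · have h := persp_le_of_mem_closure_convexHull_ZQ hf hf0 le_rfl (π := π)
        (fun z hz hz0 => (zero_add (π ⬝ᵥ z)).symm ▸
          ((mem_convexHull_sdiff_zero_iff hF).1 (subset_convexHull ℝ _ ⟨hz, hz0⟩)).2 π hπ)
        hx (by simpa using hc0.trans (hc.2 (mem_insert_of_mem _ ⟨π, hπ, rfl⟩)))
      rwa [zero_add] at h
  · rintro ⟨-, hz, hft, hpersp⟩
    obtain ⟨c, hc, hc0, y, hy, rfl, h0⟩ := exists_isLeast_eq_smul hF hQ0 hz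
    refine smul_mk_mem_closure_convexHull_ZQ hQbin hf hf0 hconn ⟨hc0, hc.2 (mem_insert _ _)⟩
      h0 hy ?_
    obtain hc1 | ⟨π, hπ, hcπ⟩ := hc.1
    · exact hc1 ▸ persp_one.trans_le (EReal.coe_le_coe_iff.2 hft)
    · exact hcπ ▸ hpersp π hπ
end

section
/- Let p ≥ 2 and let Q_sh = {z ∈ {0,1}^p : z_p ≤ z_i for all i ∈ [p−1]}. Then conv(Q_sh \ {0}) = {z ∈ [0,1]^p : ∑_{i=1}^{p−1} z_i − (p−2)·z_p ≥ 1 and z_p ≤ z_i for all i ∈ [p−1]}. -/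
/-!
The polytope on the right is compact and convex, so by Krein–Milman it is the convex hull of
its extreme points, and it suffices to show that these are nonzero binary vectors. Every point
`z` of the polytope can be pushed away from the all-ones vector `𝟙`: `𝟙 + c (z - 𝟙)` stays
inside as long as `c (1 - z_p) ≤ 1`. So if `0 < z_p < 1`, then `z` lies strictly between `𝟙` and
a point of the polytope with `p`-th coordinate `0`; hence an extreme point has `z_p ∈ {0, 1}`,
and `z_p = 1` forces `z = 𝟙`.
If `z_p = 0` and some `z_i` is fractional, then `z_i` can be moved alone when the sum
constraint is slack, and against a second fractional coordinate when it is tight (a sum equal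
to `1` cannot have exactly one fractional term).
-/

open Set Filter Topology

theorem convexHull_eq_of_extremePoints_subset {E : Type*} [AddCommGroup E] [Module ℝ E]
    [TopologicalSpace E] [T2Space E] [IsTopologicalAddGroup E] [ContinuousSMul ℝ E]
    [LocallyConvexSpace ℝ E] {s t : Set E} (hs : IsCompact s) (hsc : Convex ℝ s)
    (ht : t.Finite) (hts : t ⊆ s) (hext : s.extremePoints ℝ ⊆ t) :
    convexHull ℝ t = s := by
  refine (convexHull_min hts hsc).antisymm ?_
  calc s = closure (convexHull ℝ (s.extremePoints ℝ)) :=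
        (closure_convexHull_extremePoints hs hsc).symm
    _ ⊆ closure (convexHull ℝ t) := closure_mono (convexHull_mono hext)
    _ = convexHull ℝ t := (ht.isClosed_convexHull (𝕜 := ℝ)).closure_eq

theorem notMem_extremePoints_of_eventually_add_smul_mem {E : Type*} [AddCommGroup E]
    [Module ℝ E] {A : Set E} {x v : E} (hv : v ≠ 0)
    (h : ∀ᶠ s in 𝓝 (0 : ℝ), x + s • v ∈ A) : x ∉ A.extremePoints ℝ := by
  obtain ⟨ε, hε, hball⟩ := Metric.eventually_nhds_iff.1 h
  intro hx
  have hseg : x ∈ openSegment ℝ (x + (-(ε / 2)) • v) (x + (ε / 2) • v) :=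
    ⟨1 / 2, 1 / 2, by norm_num, by norm_num, by norm_num, by module⟩
  have hmem : ∀ s : ℝ, |s| = ε / 2 → x + s • v ∈ A := fun s hs =>
    hball (by rw [Real.dist_0_eq_abs, hs]; linarith)
  have := hx.2 (hmem _ (by rw [abs_neg, abs_of_pos (half_pos hε)]))
    (hmem _ (abs_of_pos (half_pos hε))) hseg
  simp only [add_eq_left, smul_eq_zero, neg_eq_zero] at this
  exact this.elim (fun h => hε.ne' (by linarith)) hv

theorem Finset.exists_mem_Ioo_of_sum_mem_Ioo {α : Type*} {s : Finset α} {f : α → ℝ}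
    (hf : ∀ j ∈ s, f j ∈ Set.Icc 0 1) (hs : ∑ j ∈ s, f j ∈ Set.Ioo 0 1) :
    ∃ j ∈ s, f j ∈ Set.Ioo 0 1 := by
  by_contra! hfrac
  by_cases hone : ∃ j ∈ s, f j = 1
  · obtain ⟨j, hj, hj1⟩ := hone
    linarith [Finset.single_le_sum (fun i hi => (hf i hi).1) hj, hs.2]
  · push Not at hone
    have hzero : ∀ j ∈ s, f j = 0 := fun j hj =>
      ((hf j hj).1.eq_or_lt.resolve_right fun h0 =>
        hfrac j hj ⟨h0, (hf j hj).2.lt_of_ne (hone j hj)⟩).symm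
    linarith [Finset.sum_eq_zero hzero, hs.1]

def strongHierarchy {ι : Type*} (L : ι) : Set (ι → ℝ) :=
  {z | (∀ i, z i = 0 ∨ z i = 1) ∧ ∀ i, i ≠ L → z L ≤ z i}

theorem finite_strongHierarchy {ι : Type*} [Finite ι] (L : ι) : (strongHierarchy L).Finite :=
  (Set.Finite.pi fun _ => (Set.toFinite ({0, 1} : Set ℝ))).subset
    fun _ hz => mem_univ_pi.2 fun i => hz.1 i

section StrongHierarchyPolytope

variable {ι : Type*} [Fintype ι] [DecidableEq ι]

def strongHierarchyPolytope (L : ι) : Set (ι → ℝ) :=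
  {z | (∀ i, z i ∈ Icc (0 : ℝ) 1) ∧
    1 ≤ ∑ i ∈ Finset.univ.erase L, z i - ((Fintype.card ι : ℝ) - 2) * z L ∧
    ∀ i, i ≠ L → z L ≤ z i}

variable {L : ι}

theorem convex_strongHierarchyPolytope : Convex ℝ (strongHierarchyPolytope L) := by
  rintro x ⟨hx01, hxsum, hxL⟩ y ⟨hy01, hysum, hyL⟩ a b ha hb hab
  refine ⟨fun i => ?_, ?_, fun i hi => ?_⟩
  · exact convex_Icc (0 : ℝ) 1 (hx01 i) (hy01 i) ha hb hab
  · simp only [Pi.add_apply, Pi.smul_apply, smul_eq_mul, Finset.sum_add_distrib,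
      ← Finset.mul_sum]
    nlinarith [mul_le_mul_of_nonneg_left hxsum ha, mul_le_mul_of_nonneg_left hysum hb]
  · simp only [Pi.add_apply, Pi.smul_apply, smul_eq_mul]
    gcongr <;> grind

theorem isCompact_strongHierarchyPolytope : IsCompact (strongHierarchyPolytope L) := by
  refine (isCompact_univ_pi fun _ => isCompact_Icc).of_isClosed_subset ?_
    fun z hz => mem_univ_pi.2 hz.1
  simp only [strongHierarchyPolytope, ofPred_and, ofPred_forall]
  exact (isClosed_iInter fun i => isClosed_Icc.preimage (continuous_apply i)).inter
    ((isClosed_le continuous_const (by fun_prop)).inter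
      (isClosed_iInter fun i => isClosed_iInter fun _ =>
        isClosed_le (continuous_apply L) (continuous_apply i)))

theorem sum_univ_erase_one : ∑ _i ∈ Finset.univ.erase L, (1 : ℝ) = Fintype.card ι - 1 := by
  simp [Finset.sum_erase_eq_sub (Finset.mem_univ L)]

theorem one_add_smul_sub_one_mem_strongHierarchyPolytope {z : ι → ℝ}
    (hz : z ∈ strongHierarchyPolytope L) {c : ℝ} (hc : 0 ≤ c) (hcz : c * (1 - z L) ≤ 1) :
    1 + c • (z - 1) ∈ strongHierarchyPolytope L := by
  obtain ⟨hz01, hzsum, hzL⟩ := hz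
  have hLle : ∀ i, z L ≤ z i := fun i => by
    rcases eq_or_ne i L with rfl | hi
    exacts [le_rfl, hzL i hi]
  refine ⟨fun i => ⟨?_, ?_⟩, ?_, fun i hi => ?_⟩
  · simp only [Pi.add_apply, Pi.one_apply, Pi.smul_apply, Pi.sub_apply, smul_eq_mul]
    nlinarith [hLle i]
  · simp only [Pi.add_apply, Pi.one_apply, Pi.smul_apply, Pi.sub_apply, smul_eq_mul]
    nlinarith [(hz01 i).2]
  · simp only [Pi.add_apply, Pi.one_apply, Pi.smul_apply, Pi.sub_apply, smul_eq_mul,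
      Finset.sum_add_distrib, ← Finset.mul_sum, Finset.sum_sub_distrib, sum_univ_erase_one]
    nlinarith
  · simp only [Pi.add_apply, Pi.one_apply, Pi.smul_apply, Pi.sub_apply, smul_eq_mul]
    gcongr
    exact hzL i hi

theorem one_mem_strongHierarchyPolytope : (1 : ι → ℝ) ∈ strongHierarchyPolytope L :=
  ⟨fun _ => by simp, by simp only [Pi.one_apply, sum_univ_erase_one]; linarith, fun _ _ => le_rfl⟩

theorem mem_strongHierarchyPolytope_of_apply_eq_zero {w : ι → ℝ} (h01 : ∀ i, w i ∈ Icc (0 : ℝ) 1)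
    (hL : w L = 0) (hsum : 1 ≤ ∑ i ∈ Finset.univ.erase L, w i) :
    w ∈ strongHierarchyPolytope L :=
  ⟨h01, by simpa [hL] using hsum, fun i _ => hL ▸ (h01 i).1⟩

theorem apply_eq_zero_or_one_of_mem_extremePoints {z : ι → ℝ}
    (hz : z ∈ (strongHierarchyPolytope L).extremePoints ℝ) : z L = 0 ∨ z L = 1 := by
  by_contra! h
  have hpos : 0 < z L := (hz.1.1 L).1.lt_of_ne' h.1
  have hlt : 0 < 1 - z L := sub_pos.2 ((hz.1.1 L).2.lt_of_ne h.2)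
  set y : ι → ℝ := 1 + (1 - z L)⁻¹ • (z - 1) with hy
  have hyL : y L = 0 := by
    simp only [hy, Pi.add_apply, Pi.one_apply, Pi.smul_apply, Pi.sub_apply, smul_eq_mul]
    field_simp
    ring
  have hyP : y ∈ strongHierarchyPolytope L :=
    one_add_smul_sub_one_mem_strongHierarchyPolytope hz.1 (inv_nonneg.2 hlt.le)
      (inv_mul_cancel₀ hlt.ne').le
  have hseg : z ∈ openSegment ℝ y 1 := by
    refine ⟨1 - z L, z L, hlt, hpos, by ring, ?_⟩
    rw [hy, smul_add, smul_smul, mul_inv_cancel₀ hlt.ne', one_smul]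
    module
  exact h.1 (hz.2 hyP one_mem_strongHierarchyPolytope hseg ▸ hyL)

theorem eventually_add_smul_mem_strongHierarchyPolytope {z v : ι → ℝ}
    (hz : z ∈ strongHierarchyPolytope L) (hzL : z L = 0) (hvL : v L = 0)
    (hv : ∀ i, v i ≠ 0 → z i ∈ Ioo 0 1)
    (hsum : ∑ i ∈ Finset.univ.erase L, v i = 0 ∨ 1 < ∑ i ∈ Finset.univ.erase L, z i) :
    ∀ᶠ s in 𝓝 (0 : ℝ), z + s • v ∈ strongHierarchyPolytope L := by
  have hline : ∀ a b : ℝ, Tendsto (fun s : ℝ => a + s * b) (𝓝 0) (𝓝 a) := fun a b => by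
    simpa using ((by fun_prop : Continuous fun s : ℝ => a + s * b).tendsto 0)
  have h01 : ∀ᶠ s in 𝓝 (0 : ℝ), ∀ i, z i + s * v i ∈ Icc (0 : ℝ) 1 := by
    refine eventually_all.2 fun i => ?_
    by_cases hvi : v i = 0
    · simp [hvi, hz.1 i]
    · exact ((hline _ _).eventually_mem (Ioo_mem_nhds (hv i hvi).1 (hv i hvi).2)).mono
        fun _ h => Ioo_subset_Icc_self h
  have hgt : ∀ᶠ s in 𝓝 (0 : ℝ),
      1 ≤ ∑ i ∈ Finset.univ.erase L, z i + s * ∑ i ∈ Finset.univ.erase L, v i := by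
    rcases hsum with h | h
    · simpa [h, hzL] using hz.2.1
    · exact ((hline _ _).eventually_mem (lt_mem_nhds h)).mono fun _ h => le_of_lt h
  filter_upwards [h01, hgt] with s hs01 hsgt
  refine mem_strongHierarchyPolytope_of_apply_eq_zero hs01 (by simp [hzL, hvL]) ?_
  simpa only [Pi.add_apply, Pi.smul_apply, smul_eq_mul, Finset.sum_add_distrib,
    Finset.mul_sum] using hsgt

theorem eq_zero_or_one_of_mem_extremePoints_of_apply_eq_zero {z : ι → ℝ}
    (hz : z ∈ (strongHierarchyPolytope L).extremePoints ℝ) (hzL : z L = 0) (i : ι) :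
    z i = 0 ∨ z i = 1 := by
  obtain ⟨h01, hsum, -⟩ := hz.1
  by_contra! hi
  have hfrac : z i ∈ Ioo 0 1 := ⟨(h01 i).1.lt_of_ne' hi.1, (h01 i).2.lt_of_ne hi.2⟩
  have hiL : i ≠ L := by rintro rfl; exact hi.1 hzL
  have hiE : i ∈ Finset.univ.erase L := Finset.mem_erase.2 ⟨hiL, Finset.mem_univ i⟩
  rw [hzL, mul_zero, sub_zero] at hsum
  rcases hsum.lt_or_eq with hlt | heq
  · refine notMem_extremePoints_of_eventually_add_smul_mem (v := Pi.single i 1) (by simp)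
      (eventually_add_smul_mem_strongHierarchyPolytope hz.1 hzL (by simp [hiL.symm])
        (fun k hk => ?_) (.inr hlt)) hz
    obtain rfl : k = i := by by_contra h; simp [h] at hk
    exact hfrac
  · obtain ⟨j, hj, hjfrac⟩ := Finset.exists_mem_Ioo_of_sum_mem_Ioo
      (s := (Finset.univ.erase L).erase i) (fun j _ => h01 j)
      (by rw [Finset.sum_erase_eq_sub hiE, ← heq]; constructor <;> linarith [hfrac.1, hfrac.2])
    obtain ⟨hji, hjE⟩ := Finset.mem_erase.1 hj
    refine notMem_extremePoints_of_eventually_add_smul_mem (v := Pi.single i 1 - Pi.single j 1)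
      ?_ (eventually_add_smul_mem_strongHierarchyPolytope hz.1 hzL ?_ (fun k hk => ?_) (.inl ?_))
      hz
    · intro h
      simpa [hji.symm] using congrFun h i
    · simp [hiL.symm, (Finset.ne_of_mem_erase hjE).symm]
    · by_cases hki : k = i
      · exact hki ▸ hfrac
      by_cases hkj : k = j
      · exact hkj ▸ hjfrac
      simp [hki, hkj] at hk
    · simp [Finset.sum_sub_distrib, hiE, hjE]

theorem extremePoints_strongHierarchyPolytope_subset :
    (strongHierarchyPolytope L).extremePoints ℝ ⊆ strongHierarchy L \ {0} := by
  intro z hz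
  obtain ⟨h01, hsum, hle⟩ := hz.1
  refine ⟨⟨fun i => ?_, hle⟩, ?_⟩
  · rcases apply_eq_zero_or_one_of_mem_extremePoints hz with h0 | h1
    · exact eq_zero_or_one_of_mem_extremePoints_of_apply_eq_zero hz h0 i
    · refine .inr ((h01 i).2.antisymm ?_)
      rcases eq_or_ne i L with rfl | hi
      exacts [h1.ge, h1 ▸ hle i hi]
  · rintro rfl
    norm_num at hsum

theorem strongHierarchy_diff_zero_subset :
    strongHierarchy L \ {0} ⊆ strongHierarchyPolytope L := by
  rintro z ⟨⟨hbin, hle⟩, hz0⟩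
  rcases hbin L with h0 | h1
  · obtain ⟨i, hi⟩ : ∃ i, z i ≠ 0 := by
      by_contra! h
      exact hz0 (funext h)
    have hiL : i ≠ L := by rintro rfl; exact hi h0
    refine mem_strongHierarchyPolytope_of_apply_eq_zero
      (fun k => by rcases hbin k with h | h <;> simp [h]) h0 ?_
    calc (1 : ℝ) = z i := ((hbin i).resolve_left hi).symm
      _ ≤ _ := Finset.single_le_sum (fun k _ => by rcases hbin k with h | h <;> simp [h])
          (Finset.mem_erase.2 ⟨hiL, Finset.mem_univ i⟩)
  · obtain rfl : z = 1 := funext fun i => by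
      rcases eq_or_ne i L with rfl | hi
      · exact h1
      · exact (hbin i).resolve_left fun h => by linarith [hle i hi]
    exact one_mem_strongHierarchyPolytope

end StrongHierarchyPolytope

theorem convexHull_strongHierarchy_diff_zero {ι : Type*} [Fintype ι] [DecidableEq ι] (L : ι) :
    convexHull ℝ (strongHierarchy L \ {0}) = strongHierarchyPolytope L :=
  convexHull_eq_of_extremePoints_subset isCompact_strongHierarchyPolytope
    convex_strongHierarchyPolytope (finite_strongHierarchy L).sdiff
    strongHierarchy_diff_zero_subset extremePoints_strongHierarchyPolytope_subset

/-- Lemma: the convex hull of `Q_sh \ {0}`, where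
`Q_sh = {z ∈ {0,1}^p : z_p ≤ z_i ∀ i ∈ [p-1]}`, equals
`{z ∈ [0,1]^p : ∑_{i ∈ [p-1]} z_i - (p-2)·z_p ≥ 1, z_p ≤ z_i ∀ i ∈ [p-1]}`. -/
theorem statement10 (p : ℕ) (hp : 2 ≤ p) :
    convexHull ℝ
        ({z : Fin p → ℝ | (∀ i, z i = 0 ∨ z i = 1) ∧
            ∀ i, i ≠ ⟨p - 1, by omega⟩ → z ⟨p - 1, by omega⟩ ≤ z i} \ {0}) =
      {z : Fin p → ℝ |
        (∀ i, z i ∈ Set.Icc (0 : ℝ) 1) ∧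
        1 ≤ ∑ i ∈ Finset.univ.erase ⟨p - 1, by omega⟩, z i
              - ((p : ℝ) - 2) * z ⟨p - 1, by omega⟩ ∧
        ∀ i, i ≠ ⟨p - 1, by omega⟩ → z ⟨p - 1, by omega⟩ ≤ z i} := by
  simpa only [strongHierarchy, strongHierarchyPolytope, Fintype.card_fin] using
    convexHull_strongHierarchy_diff_zero (⟨p - 1, by omega⟩ : Fin p)
end
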